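/- (Ordinal Fact 2.) Let α : ℕ → Ordinal be a sequence of ordinals with αᵢ ≥ 1 for all i, and let θ = ⨆ᵢ (α₀ ♯ α₁ ♯ ⋯ ♯ αᵢ), the supremum of the finite natural (Hessenberg) sums. Then for every t ∈ ℕ and all natural numbers n₀, …, nₜ: (α₀ ⨳ n₀) ♯ (α₁ ⨳ n₁) ♯ ⋯ ♯ (αₜ ⨳ nₜ) < ω ^ θ. -/

import Mathlib

universe u

namespace Ordinal

/-- Natural (Hessenberg) addition, as in the removed Mathlib file `SetTheory/Ordinal/NaturalOps`. -/
noncomputable def nadd : Ordinal.{u} → Ordinal.{u} → Ordinal.{u}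
  | a, b =>
    max (blsub.{u, u} a fun a' _ => nadd a' b) (blsub.{u, u} b fun b' _ => nadd a b')
termination_by o₁ o₂ => (o₁, o₂)

infixl:65 " ♯ " => Ordinal.nadd

/-- Natural (Hessenberg) multiplication, as in the removed Mathlib file. -/
noncomputable def nmul : Ordinal.{u} → Ordinal.{u} → Ordinal.{u}
  | a, b => sInf {c | ∀ a' < a, ∀ b' < b, nmul a' b ♯ nmul a b' < c ♯ nmul a' b'}
termination_by a b => (a, b)

infixl:70 " ⨳ " => Ordinal.nmul

end Ordinal

/-- Finite natural (Hessenberg) sum of a list of ordinals. -/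
noncomputable def natSum (l : List Ordinal) : Ordinal := l.foldr (· ♯ ·) 0

open Ordinal Order

namespace Ordinal

theorem nadd_def (a b : Ordinal.{u}) :
    a ♯ b = max (blsub.{u, u} a fun a' _ => a' ♯ b) (blsub.{u, u} b fun b' _ => a ♯ b') := by
  rw [nadd]

theorem lt_nadd_iff {a b c : Ordinal.{u}} :
    a < b ♯ c ↔ (∃ b' < b, a ≤ b' ♯ c) ∨ ∃ c' < c, a ≤ b ♯ c' := by
  rw [nadd_def]
  simp [lt_blsub_iff]

theorem nadd_le_iff {a b c : Ordinal.{u}} :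
    b ♯ c ≤ a ↔ (∀ b' < b, b' ♯ c < a) ∧ ∀ c' < c, b ♯ c' < a := by
  rw [nadd_def]
  simp [blsub_le_iff]

theorem nadd_lt_nadd_left {b c : Ordinal.{u}} (h : b < c) (a : Ordinal.{u}) : a ♯ b < a ♯ c :=
  lt_nadd_iff.2 (Or.inr ⟨b, h, le_rfl⟩)

theorem nadd_lt_nadd_right {b c : Ordinal.{u}} (h : b < c) (a : Ordinal.{u}) : b ♯ a < c ♯ a :=
  lt_nadd_iff.2 (Or.inl ⟨b, h, le_rfl⟩)

theorem nadd_le_nadd_left {b c : Ordinal.{u}} (h : b ≤ c) (a : Ordinal.{u}) : a ♯ b ≤ a ♯ c := by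
  rcases h.lt_or_eq with h | rfl
  · exact (nadd_lt_nadd_left h a).le
  · exact le_rfl

theorem nadd_le_nadd_right {b c : Ordinal.{u}} (h : b ≤ c) (a : Ordinal.{u}) : b ♯ a ≤ c ♯ a := by
  rcases h.lt_or_eq with h | rfl
  · exact (nadd_lt_nadd_right h a).le
  · exact le_rfl

theorem nadd_le_nadd {a b c d : Ordinal.{u}} (h1 : a ≤ b) (h2 : c ≤ d) : a ♯ c ≤ b ♯ d :=
  (nadd_le_nadd_left h2 a).trans (nadd_le_nadd_right h1 d)

theorem nadd_lt_nadd_of_lt_of_lt {a b c d : Ordinal.{u}} (h1 : a < b) (h2 : c < d) :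
    a ♯ c < b ♯ d :=
  (nadd_lt_nadd_right h1 c).trans (nadd_lt_nadd_left h2 b)

theorem nadd_comm (a b : Ordinal.{u}) : a ♯ b = b ♯ a := by
  induction a using Ordinal.induction generalizing b with
  | _ a IHa =>
  induction b using Ordinal.induction with
  | _ b IHb =>
  apply le_antisymm
  · rw [nadd_le_iff]
    exact ⟨fun a' ha' => by rw [IHa a' ha' b]; exact nadd_lt_nadd_left ha' b,
      fun b' hb' => by rw [IHb b' hb']; exact nadd_lt_nadd_right hb' a⟩
  · rw [nadd_le_iff]
    exact ⟨fun b' hb' => by rw [← IHb b' hb']; exact nadd_lt_nadd_left hb' a,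
      fun a' ha' => by rw [← IHa a' ha' b]; exact nadd_lt_nadd_right ha' b⟩

theorem nadd_assoc (a b c : Ordinal.{u}) : a ♯ b ♯ c = a ♯ (b ♯ c) := by
  induction a using Ordinal.induction generalizing b c with
  | _ a IHa =>
  induction b using Ordinal.induction generalizing c with
  | _ b IHb =>
  induction c using Ordinal.induction with
  | _ c IHc =>
  apply le_antisymm
  · rw [nadd_le_iff]
    refine ⟨fun x hx => ?_, fun c' hc' => ?_⟩
    · rcases lt_nadd_iff.1 hx with ⟨a', ha', hle⟩ | ⟨b', hb', hle⟩
      · calc x ♯ c ≤ a' ♯ b ♯ c := nadd_le_nadd_right hle c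
          _ = a' ♯ (b ♯ c) := IHa a' ha' b c
          _ < a ♯ (b ♯ c) := nadd_lt_nadd_right ha' _
      · calc x ♯ c ≤ a ♯ b' ♯ c := nadd_le_nadd_right hle c
          _ = a ♯ (b' ♯ c) := IHb b' hb' c
          _ < a ♯ (b ♯ c) := nadd_lt_nadd_left (nadd_lt_nadd_right hb' c) a
    · rw [IHc c' hc']
      exact nadd_lt_nadd_left (nadd_lt_nadd_left hc' b) a
  · rw [nadd_le_iff]
    refine ⟨fun a' ha' => ?_, fun x hx => ?_⟩
    · rw [← IHa a' ha' b c]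
      exact nadd_lt_nadd_right (nadd_lt_nadd_right ha' b) c
    · rcases lt_nadd_iff.1 hx with ⟨b', hb', hle⟩ | ⟨c', hc', hle⟩
      · calc a ♯ x ≤ a ♯ (b' ♯ c) := nadd_le_nadd_left hle a
          _ = a ♯ b' ♯ c := (IHb b' hb' c).symm
          _ < a ♯ b ♯ c := nadd_lt_nadd_right (nadd_lt_nadd_left hb' a) c
      · calc a ♯ x ≤ a ♯ (b ♯ c') := nadd_le_nadd_left hle a
          _ = a ♯ b ♯ c' := (IHc c' hc').symm
          _ < a ♯ b ♯ c := nadd_lt_nadd_left hc' _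

theorem nadd_right_comm (a b c : Ordinal.{u}) : a ♯ b ♯ c = a ♯ c ♯ b := by
  rw [nadd_assoc, nadd_comm b c, ← nadd_assoc]

@[simp] theorem nadd_zero (a : Ordinal.{u}) : a ♯ 0 = a := by
  induction a using Ordinal.induction with
  | _ a IH =>
  apply le_antisymm
  · rw [nadd_le_iff]
    exact ⟨fun a' ha' => by rw [IH a' ha']; exact ha', fun b' hb' => by simp at hb'⟩
  · apply le_of_forall_lt
    intro x hx
    rw [← IH x hx]
    exact nadd_lt_nadd_right hx 0

@[simp] theorem zero_nadd (a : Ordinal.{u}) : 0 ♯ a = a := by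
  rw [nadd_comm, nadd_zero]

theorem le_self_nadd {a b : Ordinal.{u}} : a ≤ a ♯ b := by
  simpa using nadd_le_nadd_left zero_le a

theorem le_nadd_self {a b : Ordinal.{u}} : a ≤ b ♯ a := by
  rw [nadd_comm]
  exact le_self_nadd

theorem nadd_one (a : Ordinal.{u}) : a ♯ 1 = Order.succ a := by
  induction a using Ordinal.induction with
  | _ a IH =>
  apply le_antisymm
  · rw [nadd_le_iff]
    refine ⟨fun a' ha' => ?_, fun b' hb' => ?_⟩
    · rw [IH a' ha']
      exact Order.succ_lt_succ ha'
    · rw [Ordinal.lt_one_iff_zero.1 hb', nadd_zero]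
      exact Order.lt_succ a
  · apply Order.succ_le_of_lt
    simpa using nadd_lt_nadd_left zero_lt_one a

theorem add_le_nadd (a b : Ordinal.{u}) : a + b ≤ a ♯ b := by
  induction b using Ordinal.induction with
  | _ b IH =>
  apply le_of_forall_lt
  intro x hx
  rcases lt_or_ge x a with h | h
  · exact lt_of_lt_of_le h le_self_nadd
  · have hx' : x - a < b := by
      rw [← Ordinal.add_sub_cancel_of_le h] at hx
      exact lt_of_add_lt_add_left hx
    calc x = a + (x - a) := (Ordinal.add_sub_cancel_of_le h).symm
      _ ≤ a ♯ (x - a) := IH _ hx'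
      _ < a ♯ b := nadd_lt_nadd_left hx' a

theorem nmul_def (a b : Ordinal.{u}) :
    a ⨳ b = sInf {c | ∀ a' < a, ∀ b' < b, a' ⨳ b ♯ a ⨳ b' < c ♯ a' ⨳ b'} := by
  rw [nmul]

theorem nmul_nonempty (a b : Ordinal.{u}) :
    {c : Ordinal.{u} | ∀ a' < a, ∀ b' < b, a' ⨳ b ♯ a ⨳ b' < c ♯ a' ⨳ b'}.Nonempty := by
  refine ⟨blsub.{u, u} a fun a' _ => blsub.{u, u} b fun b' _ => a' ⨳ b ♯ a ⨳ b', ?_⟩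
  intro a' ha' b' hb'
  exact lt_of_lt_of_le ((lt_blsub.{u, u} (fun b' _ => a' ⨳ b ♯ a ⨳ b') b' hb').trans
    (lt_blsub.{u, u} (fun a' _ => blsub.{u, u} b fun b' _ => a' ⨳ b ♯ a ⨳ b') a' ha'))
    le_self_nadd

theorem nmul_nadd_lt {a' a b' b : Ordinal.{u}} (ha : a' < a) (hb : b' < b) :
    a' ⨳ b ♯ a ⨳ b' < a ⨳ b ♯ a' ⨳ b' := by
  have h : a ⨳ b ∈ {c : Ordinal.{u} | ∀ a' < a, ∀ b' < b, a' ⨳ b ♯ a ⨳ b' < c ♯ a' ⨳ b'} := by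
    rw [nmul_def a b]
    exact csInf_mem (nmul_nonempty a b)
  exact h a' ha b' hb

@[simp] theorem nmul_zero (a : Ordinal.{u}) : a ⨳ 0 = 0 := by
  rw [nmul_def]
  refine le_antisymm (csInf_le' ?_) zero_le
  simp only [Set.mem_setOf_eq]
  intro a' _ b' hb'
  simp at hb'

theorem nmul_add_one_le (a b : Ordinal.{u}) : a ⨳ (b + 1) ≤ a ⨳ b ♯ a := by
  induction a using Ordinal.induction with
  | _ a IH =>
  rw [nmul_def a (b + 1)]
  apply csInf_le'
  simp only [Set.mem_setOf_eq]
  intro a' ha' b' hb'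
  have IH' := IH a' ha'
  rcases (Order.lt_add_one_iff.1 hb').lt_or_eq with hb | hb
  · calc a' ⨳ (b + 1) ♯ a ⨳ b' ≤ a' ⨳ b ♯ a' ♯ a ⨳ b' := nadd_le_nadd_right IH' _
      _ = a' ⨳ b ♯ a ⨳ b' ♯ a' := nadd_right_comm _ _ _
      _ < a ⨳ b ♯ a' ⨳ b' ♯ a := nadd_lt_nadd_of_lt_of_lt (nmul_nadd_lt ha' hb) ha'
      _ = a ⨳ b ♯ a ♯ a' ⨳ b' := nadd_right_comm _ _ _
  · rw [hb]
    calc a' ⨳ (b + 1) ♯ a ⨳ b ≤ a' ⨳ b ♯ a' ♯ a ⨳ b := nadd_le_nadd_right IH' _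
      _ = a' ⨳ b ♯ a ⨳ b ♯ a' := nadd_right_comm _ _ _
      _ < a' ⨳ b ♯ a ⨳ b ♯ a := nadd_lt_nadd_left ha' _
      _ = a ⨳ b ♯ a ♯ a' ⨳ b := by
        rw [nadd_right_comm (a ⨳ b) a (a' ⨳ b), nadd_comm (a ⨳ b) (a' ⨳ b)]

end Ordinal

/-- Key monomial identity: `(ω^d·q + r) ♯ (ω^d·p + s) = ω^d·(q+p) + (r ♯ s)`. -/
lemma monomial_nadd (d : Ordinal)
    (cl : ∀ r s, r < omega0 ^ d → s < omega0 ^ d → r ♯ s < omega0 ^ d) :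
    ∀ (v : Ordinal) (q p : ℕ) (r s : Ordinal), r < omega0 ^ d → s < omega0 ^ d →
      omega0 ^ d * (q + p : ℕ) + (r ♯ s) = v →
      (omega0 ^ d * q + r) ♯ (omega0 ^ d * p + s) = omega0 ^ d * (q + p : ℕ) + (r ♯ s) := by
  have hd0 : (omega0 ^ d : Ordinal) ≠ 0 := (opow_pos d omega0_pos).ne'
  intro v
  induction v using Ordinal.induction with
  | _ v IH =>
  intro q p r s hr hs hv
  subst hv
  -- helper: one-sided bound
  have key : ∀ (q p : ℕ) (r s : Ordinal), r < omega0 ^ d → s < omega0 ^ d →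
      omega0 ^ d * (q + p : ℕ) + (r ♯ s) = omega0 ^ d * (q + p : ℕ) + (r ♯ s) →
      True := fun _ _ _ _ _ _ _ => trivial
  apply le_antisymm
  · rw [nadd_le_iff]
    constructor
    · intro x hx
      obtain ⟨qn, hqn⟩ : ∃ m : ℕ, x / omega0 ^ d = (m : Ordinal) := by
        refine lt_omega0.1 (lt_of_lt_of_le ((div_lt hd0).2 ?_) (le_of_lt (nat_lt_omega0 (q+1))))
        · calc x < omega0 ^ d * q + r := hx
            _ < omega0 ^ d * q + omega0 ^ d := add_lt_add_right hr _
            _ = omega0 ^ d * ((q : Ordinal) + 1) := by rw [mul_add, mul_one]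
            _ = omega0 ^ d * ((q + 1 : ℕ) : Ordinal) := by push_cast; ring_nf
      have hxeq : omega0 ^ d * (qn : Ordinal) + x % omega0 ^ d = x := by
        rw [← hqn]; exact div_add_mod x _
      have hr' : x % omega0 ^ d < omega0 ^ d := mod_lt x hd0
      set r' := x % omega0 ^ d with hr'def
      have hqle : qn ≤ q := by
        by_contra h
        push_neg at h
        have : (q : Ordinal) + 1 ≤ (qn : Ordinal) := by
          exact_mod_cast Nat.succ_le_of_lt h
        have : omega0 ^ d * ((q : Ordinal) + 1) ≤ omega0 ^ d * qn :=
          mul_le_mul_right this _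
        have hxx : x < omega0 ^ d * ((q:Ordinal) + 1) := by
          calc x < omega0 ^ d * q + r := hx
            _ < omega0 ^ d * q + omega0 ^ d := add_lt_add_right hr _
            _ = omega0 ^ d * ((q : Ordinal) + 1) := by rw [mul_add, mul_one]
        have := lt_of_lt_of_le hxx this
        exact absurd (le_trans (le_self_add) (le_of_eq hxeq)) (not_le.2 this)
      rcases lt_or_eq_of_le hqle with hlt | heq
      · -- qn < q
        have hvnew : omega0 ^ d * ((qn + p : ℕ) : Ordinal) + (r' ♯ s)
            < omega0 ^ d * ((q + p : ℕ) : Ordinal) + (r ♯ s) := by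
          have h1 : omega0 ^ d * ((qn + p : ℕ) : Ordinal) + (r' ♯ s)
              < omega0 ^ d * ((qn + p + 1 : ℕ) : Ordinal) := by
            rw [show ((qn + p + 1 : ℕ) : Ordinal) = ((qn + p : ℕ) : Ordinal) + 1 by push_cast; ring,
              mul_add, mul_one]
            exact add_lt_add_right (cl _ _ hr' hs) _
          have h2 : omega0 ^ d * ((qn + p + 1 : ℕ) : Ordinal)
              ≤ omega0 ^ d * ((q + p : ℕ) : Ordinal) := by
            apply mul_le_mul_right
            exact_mod_cast Nat.succ_le_of_lt (by omega)
          exact lt_of_lt_of_le h1 (le_trans h2 (le_self_add))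
        have := IH _ hvnew qn p r' s hr' hs rfl
        rw [hxeq] at this
        rw [this]
        exact hvnew
      · -- qn = q, so r' < r
        subst heq
        have hrr : r' < r := by
          have : omega0 ^ d * (qn : Ordinal) + r' < omega0 ^ d * (qn : Ordinal) + r := by
            rw [hxeq]; exact hx
          exact lt_of_add_lt_add_left this
        have hvnew : omega0 ^ d * ((qn + p : ℕ) : Ordinal) + (r' ♯ s)
            < omega0 ^ d * ((qn + p : ℕ) : Ordinal) + (r ♯ s) :=
          add_lt_add_right (nadd_lt_nadd_right hrr s) _
        have := IH _ hvnew qn p r' s hr' hs rfl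
        rw [hxeq] at this
        rw [this]
        exact hvnew
    · intro y hy
      obtain ⟨pn, hpn⟩ : ∃ m : ℕ, y / omega0 ^ d = (m : Ordinal) := by
        refine lt_omega0.1 (lt_of_lt_of_le ((div_lt hd0).2 ?_) (le_of_lt (nat_lt_omega0 (p+1))))
        · calc y < omega0 ^ d * p + s := hy
            _ < omega0 ^ d * p + omega0 ^ d := add_lt_add_right hs _
            _ = omega0 ^ d * ((p : Ordinal) + 1) := by rw [mul_add, mul_one]
            _ = omega0 ^ d * ((p + 1 : ℕ) : Ordinal) := by push_cast; ring_nf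
      have hyeq : omega0 ^ d * (pn : Ordinal) + y % omega0 ^ d = y := by
        rw [← hpn]; exact div_add_mod y _
      have hs' : y % omega0 ^ d < omega0 ^ d := mod_lt y hd0
      set s' := y % omega0 ^ d with hs'def
      have hple : pn ≤ p := by
        by_contra h
        push_neg at h
        have : (p : Ordinal) + 1 ≤ (pn : Ordinal) := by
          exact_mod_cast Nat.succ_le_of_lt h
        have : omega0 ^ d * ((p : Ordinal) + 1) ≤ omega0 ^ d * pn :=
          mul_le_mul_right this _
        have hyy : y < omega0 ^ d * ((p:Ordinal) + 1) := by
          calc y < omega0 ^ d * p + s := hy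
            _ < omega0 ^ d * p + omega0 ^ d := add_lt_add_right hs _
            _ = omega0 ^ d * ((p : Ordinal) + 1) := by rw [mul_add, mul_one]
        have := lt_of_lt_of_le hyy this
        exact absurd (le_trans (le_self_add) (le_of_eq hyeq)) (not_le.2 this)
      rcases lt_or_eq_of_le hple with hlt | heq
      · have hvnew : omega0 ^ d * ((q + pn : ℕ) : Ordinal) + (r ♯ s')
            < omega0 ^ d * ((q + p : ℕ) : Ordinal) + (r ♯ s) := by
          have h1 : omega0 ^ d * ((q + pn : ℕ) : Ordinal) + (r ♯ s')
              < omega0 ^ d * ((q + pn + 1 : ℕ) : Ordinal) := by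
            rw [show ((q + pn + 1 : ℕ) : Ordinal) = ((q + pn : ℕ) : Ordinal) + 1 by push_cast; ring,
              mul_add, mul_one]
            exact add_lt_add_right (cl _ _ hr hs') _
          have h2 : omega0 ^ d * ((q + pn + 1 : ℕ) : Ordinal)
              ≤ omega0 ^ d * ((q + p : ℕ) : Ordinal) := by
            apply mul_le_mul_right
            exact_mod_cast Nat.succ_le_of_lt (by omega)
          exact lt_of_lt_of_le h1 (le_trans h2 (le_self_add))
        have := IH _ hvnew q pn r s' hr hs' rfl
        rw [hyeq] at this
        rw [this]
        exact hvnew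
      · subst heq
        have hss : s' < s := by
          have : omega0 ^ d * (pn : Ordinal) + s' < omega0 ^ d * (pn : Ordinal) + s := by
            rw [hyeq]; exact hy
          exact lt_of_add_lt_add_left this
        have hvnew : omega0 ^ d * ((q + pn : ℕ) : Ordinal) + (r ♯ s')
            < omega0 ^ d * ((q + pn : ℕ) : Ordinal) + (r ♯ s) :=
          add_lt_add_right (nadd_lt_nadd_left hss r) _
        have := IH _ hvnew q pn r s' hr hs' rfl
        rw [hyeq] at this
        rw [this]
        exact hvnew
  · -- ≥ direction
    apply le_of_forall_lt
    intro z hz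
    rcases lt_or_ge z (omega0 ^ d * ((q + p : ℕ) : Ordinal)) with hzA | hzA
    · have : z < omega0 ^ d * q + omega0 ^ d * p := by
        rw [← mul_add]
        rwa [show ((q:Ordinal) + p) = ((q + p : ℕ) : Ordinal) by push_cast; ring]
      calc z < omega0 ^ d * q + omega0 ^ d * p := this
        _ ≤ (omega0 ^ d * q) ♯ (omega0 ^ d * p) := add_le_nadd _ _
        _ ≤ (omega0 ^ d * q + r) ♯ (omega0 ^ d * p + s) :=
            nadd_le_nadd (le_self_add) (le_self_add)
    · set A := omega0 ^ d * ((q + p : ℕ) : Ordinal) with hA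
      have hzeq : A + (z - A) = z := Ordinal.add_sub_cancel_of_le hzA
      have hw : z - A < r ♯ s := by
        have : A + (z - A) < A + (r ♯ s) := by rw [hzeq]; exact hz
        exact lt_of_add_lt_add_left this
      rcases lt_nadd_iff.1 hw with ⟨r', hr'r, hle⟩ | ⟨s', hs's, hle⟩
      · have hvnew : A + (r' ♯ s) < A + (r ♯ s) :=
          add_lt_add_right (nadd_lt_nadd_right hr'r s) _
        have heq := IH _ hvnew q p r' s (hr'r.trans hr) hs rfl
        calc z = A + (z - A) := hzeq.symm
          _ ≤ A + (r' ♯ s) := add_le_add_right hle _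
          _ = (omega0 ^ d * q + r') ♯ (omega0 ^ d * p + s) := heq.symm
          _ < (omega0 ^ d * q + r) ♯ (omega0 ^ d * p + s) :=
              nadd_lt_nadd_right (add_lt_add_right hr'r _) _
      · have hvnew : A + (r ♯ s') < A + (r ♯ s) :=
          add_lt_add_right (nadd_lt_nadd_left hs's r) _
        have heq := IH _ hvnew q p r s' hr (hs's.trans hs) rfl
        calc z = A + (z - A) := hzeq.symm
          _ ≤ A + (r ♯ s') := add_le_add_right hle _
          _ = (omega0 ^ d * q + r) ♯ (omega0 ^ d * p + s') := heq.symm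
          _ < (omega0 ^ d * q + r) ♯ (omega0 ^ d * p + s) :=
              nadd_lt_nadd_left (add_lt_add_right hs's _) _

/-- `ω ^ c` is closed under natural addition. -/
lemma nadd_lt_omega0_opow' : ∀ (c : Ordinal) (a b : Ordinal),
    a < omega0 ^ c → b < omega0 ^ c → a ♯ b < omega0 ^ c := by
  intro c
  induction c using Ordinal.induction with
  | _ c IH =>
  intro a b ha hb
  rcases zero_or_succ_or_isSuccLimit c with rfl | ⟨d, rfl⟩ | hc
  · rw [opow_zero, lt_one_iff_zero] at ha hb
    subst ha; subst hb
    simpa using opow_pos (0 : Ordinal) omega0_pos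
  · -- successor case
    have cl := IH d (lt_succ d)
    have hd0 : (omega0 ^ d : Ordinal) ≠ 0 := (opow_pos d omega0_pos).ne'
    rw [opow_succ] at ha hb ⊢
    obtain ⟨m', hm', ham⟩ := (lt_mul_iff_of_isSuccLimit isSuccLimit_omega0).1 ha
    obtain ⟨n', hn', hbn⟩ := (lt_mul_iff_of_isSuccLimit isSuccLimit_omega0).1 hb
    obtain ⟨m, rfl⟩ := lt_omega0.1 hm'
    obtain ⟨n, rfl⟩ := lt_omega0.1 hn'
    -- decompose a and b
    obtain ⟨qa, hqa⟩ : ∃ k : ℕ, a / omega0 ^ d = (k : Ordinal) :=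
      lt_omega0.1 (lt_of_lt_of_le ((div_lt hd0).2 ham) (le_of_lt (nat_lt_omega0 m)))
    obtain ⟨qb, hqb⟩ : ∃ k : ℕ, b / omega0 ^ d = (k : Ordinal) :=
      lt_omega0.1 (lt_of_lt_of_le ((div_lt hd0).2 hbn) (le_of_lt (nat_lt_omega0 n)))
    have haeq : omega0 ^ d * (qa : Ordinal) + a % omega0 ^ d = a := by
      rw [← hqa]; exact div_add_mod a _
    have hbeq : omega0 ^ d * (qb : Ordinal) + b % omega0 ^ d = b := by
      rw [← hqb]; exact div_add_mod b _
    have hra : a % omega0 ^ d < omega0 ^ d := mod_lt a hd0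
    have hrb : b % omega0 ^ d < omega0 ^ d := mod_lt b hd0
    have heq := monomial_nadd d cl _ qa qb (a % omega0 ^ d) (b % omega0 ^ d) hra hrb rfl
    rw [haeq, hbeq] at heq
    rw [heq]
    calc omega0 ^ d * ((qa + qb : ℕ) : Ordinal) + (a % omega0 ^ d ♯ b % omega0 ^ d)
        < omega0 ^ d * ((qa + qb : ℕ) : Ordinal) + omega0 ^ d :=
          add_lt_add_right (cl _ _ hra hrb) _
      _ = omega0 ^ d * ((qa + qb + 1 : ℕ) : Ordinal) := by
          rw [show ((qa + qb + 1 : ℕ) : Ordinal) = ((qa + qb : ℕ) : Ordinal) + 1 by push_cast; ring,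
            mul_add, mul_one]
      _ < omega0 ^ d * omega0 :=
          mul_lt_mul_of_pos_left (nat_lt_omega0 _) (opow_pos d omega0_pos)
  · -- limit case
    obtain ⟨f, hf, haf⟩ := (lt_opow_of_isSuccLimit omega0_ne_zero hc).1 ha
    obtain ⟨g, hg, hbg⟩ := (lt_opow_of_isSuccLimit omega0_ne_zero hc).1 hb
    have h1 : a < omega0 ^ max f g :=
      lt_of_lt_of_le haf (opow_le_opow_right omega0_pos (le_max_left f g))
    have h2 : b < omega0 ^ max f g :=
      lt_of_lt_of_le hbg (opow_le_opow_right omega0_pos (le_max_right f g))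
    exact lt_of_lt_of_le (IH _ (max_lt hf hg) a b h1 h2)
      (opow_le_opow_right omega0_pos (max_lt hf hg).le)

lemma natSum_cons (x : Ordinal) (l : List Ordinal) : natSum (x :: l) = x ♯ natSum l := rfl

lemma natSum_concat (l : List Ordinal) (x : Ordinal) : natSum (l ++ [x]) = natSum l ♯ x := by
  induction l with
  | nil => simp [natSum, nadd_comm]
  | cons a l ih => simp only [List.cons_append, natSum_cons, ih, nadd_assoc]

lemma le_natSum (l : List Ordinal) (x : Ordinal) (hx : x ∈ l) : x ≤ natSum l := by
  induction l with
  | nil => simp at hx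
  | cons a l ih =>
    rcases List.mem_cons.1 hx with rfl | h
    · exact le_self_nadd
    · exact le_trans (ih h) le_nadd_self

lemma natSum_lt_omega0_opow (c : Ordinal) (l : List Ordinal)
    (h : ∀ x ∈ l, x < Ordinal.omega0 ^ c) : natSum l < Ordinal.omega0 ^ c := by
  induction l with
  | nil => exact opow_pos c omega0_pos
  | cons a l ih =>
    exact nadd_lt_omega0_opow' c _ _ (h a List.mem_cons_self)
      (ih fun x hx => h x (List.mem_cons_of_mem a hx))

lemma nmul_nat_lt_omega0_opow (c a : Ordinal) (ha : a < Ordinal.omega0 ^ c) (k : ℕ) :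
    a ⨳ (k : Ordinal) < Ordinal.omega0 ^ c := by
  induction k with
  | zero => simpa using opow_pos c omega0_pos
  | succ k ih =>
    rw [show ((k + 1 : ℕ) : Ordinal) = (k : Ordinal) + 1 by push_cast; ring]
    exact lt_of_le_of_lt (nmul_add_one_le _ _) (nadd_lt_omega0_opow' c _ _ ih ha)

/-- Ordinal Fact 2: if αᵢ ≥ 1 for all i and θ is the supremum of the finite
Hessenberg sums α₀ ♯ ⋯ ♯ αᵢ, then every combination
(α₀ ⨳ n₀) ♯ ⋯ ♯ (αₜ ⨳ nₜ) is below ω ^ θ. -/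
theorem ordinal_fact_two (α : ℕ → Ordinal) (hα : ∀ i, 1 ≤ α i) (θ : Ordinal)
    (hθ : θ = ⨆ i : ℕ, natSum (List.ofFn fun j : Fin (i + 1) => α j.val))
    (t : ℕ) (n : ℕ → ℕ) :
    natSum (List.ofFn fun i : Fin (t + 1) => α i.val ⨳ (n i.val : Ordinal)) <
      Ordinal.omega0 ^ θ := by
  set S : ℕ → Ordinal := fun i => natSum (List.ofFn fun j : Fin (i + 1) => α j.val) with hS
  have hSθ : ∀ i, S i ≤ θ := by
    intro i
    rw [hθ]
    exact Ordinal.le_iSup S i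
  have hstep : ∀ i, S (i + 1) = S i ♯ α (i + 1) := by
    intro i
    have : (List.ofFn fun j : Fin (i + 1 + 1) => α j.val)
        = (List.ofFn fun j : Fin (i + 1) => α j.val) ++ [α (i + 1)] := by
      rw [List.ofFn_succ']
      simp [List.concat_eq_append, Fin.last]
    rw [hS]
    simp only
    rw [this, natSum_concat]
  have hlt : ∀ i, α i < θ := by
    intro i
    have h1 : α i ≤ S i := by
      apply le_natSum
      rw [List.mem_ofFn]
      exact ⟨⟨i, Nat.lt_succ_self i⟩, rfl⟩
    have h2 : S i < S (i + 1) := by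
      rw [hstep i]
      calc S i < S i ♯ 1 := by rw [nadd_one]; exact Order.lt_succ _
        _ ≤ S i ♯ α (i + 1) := nadd_le_nadd_left (hα (i + 1)) _
    exact lt_of_le_of_lt h1 (lt_of_lt_of_le h2 (hSθ (i + 1)))
  apply natSum_lt_omega0_opow
  intro x hx
  rw [List.mem_ofFn] at hx
  obtain ⟨i, rfl⟩ := hx
  exact nmul_nat_lt_omega0_opow θ _
    (lt_of_lt_of_le (hlt i.val) (right_le_opow θ one_lt_omega0)) _
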